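/- Let b = λ + iη with λ, η ∈ ℝ and λ > 0. Define the entire function 𝒩(b;w) = e^{−iw} · Σ_{j=0}^{∞} (b)_j (2iw)^j / ((2λ)_j · j!) (the confluent hypergeometric combination e^{−iw}·₁F₁(b; 2λ; 2iw)), and let 𝒫̂ₙ(b;x) = (2ⁿ(λ)ₙ/(2λ)ₙ)·𝒫ₙ(b;x) be the monic complementary Romanovski–Routh polynomials. Then for every x ∈ ℝ and every w ∈ ℂ, e^{xw} · 𝒩(b;w) = Σ_{n=0}^{∞} 𝒫̂ₙ(b;x) · wⁿ/n!, the series converging absolutely for all w ∈ ℂ. -/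

import Mathlib

/-!
The monic polynomials have the explicit form
`𝒫̂ₙ(b;x) = ∑ⱼ (n choose j) ((b)ⱼ/(2λ)ⱼ) (2i)ʲ (x - i)ⁿ⁻ʲ`:
after clearing denominators the three-term recurrence reads
`(2λ+n+1) 𝒫̂ₙ₊₂ = (2(λ+n+1)x - 2η) 𝒫̂ₙ₊₁ - (n+1)(x²+1) 𝒫̂ₙ`, and with `y = x - i`, `z = 2i` the
right-hand side is `((2λ+2n+2)y + (b+n+1)z) 𝒫̂ₙ₊₁ - (n+1) y (y+z) 𝒫̂ₙ`, which the binomial sums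
satisfy coefficientwise by Pascal's rule and `(b)ⱼ₊₁/(2λ)ⱼ₊₁ · (2λ+j) = (b)ⱼ/(2λ)ⱼ · (b+j)`.
The generating function of such binomial sums is the Cauchy product of `e^{(x-i)w}` with
`∑ⱼ (b)ⱼ/(2λ)ⱼ (2iw)ʲ/j!`, and `e^{xw} e^{-iw} = e^{(x-i)w}`; absolute convergence comes from
`|(b)ⱼ/(2λ)ⱼ| ≤ (1 + |b|/(2λ))ʲ`.
-/

open Complex

/-- Pochhammer symbol `(a)ₖ` over ℂ. -/
noncomputable def poch (a : ℂ) (k : ℕ) : ℂ := Polynomial.eval a (ascPochhammer ℂ k)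

/-- The entire function `𝒩(b;w) = e^{−iw}·₁F₁(b; 2λ; 2iw)`, with `b = λ + iη`. -/
noncomputable def NFun (lam eta : ℝ) (w : ℂ) : ℂ :=
  Complex.exp (-I * w) *
    ∑' j : ℕ, poch ((lam : ℂ) + (eta : ℂ) * I) j * (2 * I * w) ^ j /
      (poch (2 * lam) j * (Nat.factorial j : ℂ))

/-- Complementary Romanovski–Routh polynomials `𝒫ₙ(b;x)` with `b = λ + iη`,
defined by the three-term recurrence, evaluated at complex `x`. -/
noncomputable def crr (lam eta : ℝ) : ℕ → ℂ → ℂ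
  | 0, _ => 1
  | 1, x => x - ((eta / lam : ℝ) : ℂ)
  | n + 2, x =>
      (x - ((eta / (lam + n + 1) : ℝ) : ℂ)) * crr lam eta (n + 1) x -
        (((n + 1) * (2 * lam + n) / (4 * (lam + n) * (lam + n + 1)) : ℝ) : ℂ) *
          (x ^ 2 + 1) * crr lam eta n x

/-- Monic complementary Romanovski–Routh polynomials
`𝒫̂ₙ(b;x) = (2ⁿ(λ)ₙ/(2λ)ₙ)·𝒫ₙ(b;x)`. -/
noncomputable def crrMonic (lam eta : ℝ) (n : ℕ) (x : ℂ) : ℂ :=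
  ((2 : ℂ) ^ n * poch (lam : ℂ) n / poch (2 * lam) n) * crr lam eta n x

open Finset Finset.Nat

section HomogeneousSum

variable {R : Type*} [CommRing R]

def homSum (f : ℕ → R) (z y : R) (n : ℕ) : R :=
  ∑ p ∈ antidiagonal n, f p.1 * z ^ p.1 * y ^ p.2

theorem homSum_succ (f : ℕ → R) (z y : R) (n : ℕ) :
    homSum f z y (n + 1) =
      f 0 * y ^ (n + 1) + ∑ p ∈ antidiagonal n, f (p.1 + 1) * z ^ (p.1 + 1) * y ^ p.2 := by
  simp [homSum, sum_antidiagonal_succ]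

theorem mul_homSum_of_eq_zero {f : ℕ → R} (z y : R) {n : ℕ} (hf : f (n + 1) = 0) :
    y * homSum f z y n = homSum f z y (n + 1) := by
  rw [homSum, homSum, sum_antidiagonal_succ', hf, zero_mul, zero_mul, zero_add, mul_sum]
  exact sum_congr rfl fun p _ => by ring

def binomSum (c : ℕ → R) (z y : R) (n : ℕ) : R :=
  homSum (fun j => (n.choose j : R) * c j) z y n

theorem binomSum_zero (c : ℕ → R) (z y : R) : binomSum c z y 0 = c 0 := by
  simp [binomSum, homSum]

theorem binomSum_one (c : ℕ → R) (z y : R) : binomSum c z y 1 = c 0 * y + c 1 * z := by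
  simp [binomSum, homSum, sum_antidiagonal_succ]

variable {a b : R} {c : ℕ → R}

theorem choose_mul_coeff_recurrence (hc : ∀ j : ℕ, c (j + 1) * (a + j) = c j * (b + j))
    (n j : ℕ) :
    (a + n + 1) * ((n + 2).choose (j + 1) * c (j + 1)) =
      (a + 2 * n + 2) * ((n + 1).choose (j + 1) * c (j + 1)) +
        (b + n + 1) * ((n + 1).choose j * c j) -
        (n + 1) * (n.choose (j + 1) * c (j + 1)) - (n + 1) * (n.choose j * c j) := by
  have pascal₁ : ((n + 1).choose (j + 1) : R) = n.choose j + n.choose (j + 1) := by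
    rw [Nat.choose_succ_succ', Nat.cast_add]
  have pascal₂ : ((n + 2).choose (j + 1) : R) = (n + 1).choose j + (n + 1).choose (j + 1) := by
    rw [Nat.choose_succ_succ', Nat.cast_add]
  have absorb₁ : ((n : R) + 1) * n.choose j = (n + 1).choose (j + 1) * (j + 1) := by
    exact_mod_cast congrArg (Nat.cast : ℕ → R) (Nat.add_one_mul_choose_eq n j)
  have absorb₂ : ((n : R) + 2) * (n + 1).choose j = (n + 2).choose (j + 1) * (j + 1) := by
    exact_mod_cast congrArg (Nat.cast : ℕ → R) (Nat.add_one_mul_choose_eq (n + 1) j)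
  linear_combination (-((n : R) + 1) * c (j + 1)) * pascal₁
    + (((n : R) + 2) * c (j + 1) + (b - 1) * c j) * pascal₂
    - (c (j + 1) - c j) * absorb₁ + (c (j + 1) - c j) * absorb₂
    + (((n + 2).choose (j + 1) : R) - (n + 1).choose (j + 1)) * hc j

theorem binomSum_recurrence (hc : ∀ j : ℕ, c (j + 1) * (a + j) = c j * (b + j)) (z y : R)
    (n : ℕ) :
    (a + n + 1) * binomSum c z y (n + 2) =
      ((a + 2 * n + 2) * y + (b + n + 1) * z) * binomSum c z y (n + 1) -
        (n + 1) * y * (y + z) * binomSum c z y n := by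
  set F : ℕ → ℕ → R := fun m j => (m.choose j : R) * c j
  have hF : ∀ m, F m (m + 1) = 0 := fun m => by simp [F]
  have yS₁ : y * binomSum c z y (n + 1) = c 0 * y ^ (n + 2) +
      ∑ p ∈ antidiagonal (n + 1), F (n + 1) (p.1 + 1) * z ^ (p.1 + 1) * y ^ p.2 := by
    rw [binomSum, mul_homSum_of_eq_zero z y (hF (n + 1)), homSum_succ]
    simp [F]
  have zS₁ : z * binomSum c z y (n + 1) =
      ∑ p ∈ antidiagonal (n + 1), F (n + 1) p.1 * z ^ (p.1 + 1) * y ^ p.2 := by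
    rw [binomSum, homSum, mul_sum]
    exact sum_congr rfl fun p _ => by ring
  have yyS₀ : y * y * binomSum c z y n = c 0 * y ^ (n + 2) +
      ∑ p ∈ antidiagonal (n + 1), F n (p.1 + 1) * z ^ (p.1 + 1) * y ^ p.2 := by
    have hF' : F n (n + 2) = 0 := by simp [F, Nat.choose_eq_zero_of_lt (by omega : n < n + 2)]
    rw [binomSum, mul_assoc, mul_homSum_of_eq_zero z y (hF n),
      mul_homSum_of_eq_zero z y hF', homSum_succ]
    simp [F]
  have zyS₀ : z * y * binomSum c z y n =
      ∑ p ∈ antidiagonal (n + 1), F n p.1 * z ^ (p.1 + 1) * y ^ p.2 := by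
    rw [binomSum, mul_assoc, mul_homSum_of_eq_zero z y (hF n), homSum, mul_sum]
    exact sum_congr rfl fun p _ => by ring
  have S₂ : binomSum c z y (n + 2) = c 0 * y ^ (n + 2) +
      ∑ p ∈ antidiagonal (n + 1), F (n + 2) (p.1 + 1) * z ^ (p.1 + 1) * y ^ p.2 := by
    rw [binomSum, homSum_succ]
    simp [F]
  have coeffs : (a + n + 1) *
        ∑ p ∈ antidiagonal (n + 1), F (n + 2) (p.1 + 1) * z ^ (p.1 + 1) * y ^ p.2 =
      (a + 2 * n + 2) *
          ∑ p ∈ antidiagonal (n + 1), F (n + 1) (p.1 + 1) * z ^ (p.1 + 1) * y ^ p.2 +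
        (b + n + 1) * ∑ p ∈ antidiagonal (n + 1), F (n + 1) p.1 * z ^ (p.1 + 1) * y ^ p.2 -
        (n + 1) * ∑ p ∈ antidiagonal (n + 1), F n (p.1 + 1) * z ^ (p.1 + 1) * y ^ p.2 -
        (n + 1) * ∑ p ∈ antidiagonal (n + 1), F n p.1 * z ^ (p.1 + 1) * y ^ p.2 := by
    simp only [mul_sum, ← sum_add_distrib, ← sum_sub_distrib]
    exact sum_congr rfl fun p _ => by
      linear_combination (z ^ (p.1 + 1) * y ^ p.2) * choose_mul_coeff_recurrence hc n p.1
  linear_combination (a + n + 1) * S₂ - (a + 2 * n + 2) * yS₁ - (b + n + 1) * zS₁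
    + (n + 1) * yyS₀ + (n + 1) * zyS₀ + coeffs

end HomogeneousSum

section Pochhammer

theorem poch_zero (a : ℂ) : poch a 0 = 1 := by simp [poch]

theorem poch_succ (a : ℂ) (k : ℕ) : poch a (k + 1) = poch a k * (a + k) :=
  ascPochhammer_succ_eval k a

noncomputable def pochRatio (a b : ℂ) (j : ℕ) : ℂ := poch b j / poch a j

theorem pochRatio_zero (a b : ℂ) : pochRatio a b 0 = 1 := by simp [pochRatio, poch_zero]

theorem pochRatio_succ (a b : ℂ) (j : ℕ) :
    pochRatio a b (j + 1) = pochRatio a b j * (b + j) / (a + j) := by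
  rw [pochRatio, pochRatio, poch_succ, poch_succ, div_mul_eq_mul_div, div_div]

theorem pochRatio_succ_mul {a : ℂ} (b : ℂ) {j : ℕ} (h : a + j ≠ 0) :
    pochRatio a b (j + 1) * (a + j) = pochRatio a b j * (b + j) := by
  rw [pochRatio_succ, div_mul_cancel₀ _ h]

theorem norm_pochRatio_le {r : ℝ} (hr : 0 < r) (b : ℂ) (j : ℕ) :
    ‖pochRatio r b j‖ ≤ (1 + ‖b‖ / r) ^ j := by
  induction j with
  | zero => simp [pochRatio_zero]
  | succ j ih =>
    have hrj : 0 < r + j := by positivity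
    have hnorm : ‖(r : ℂ) + j‖ = r + j := by
      rw [← ofReal_natCast, ← ofReal_add, Complex.norm_of_nonneg hrj.le]
    have hb : ‖b + j‖ ≤ (1 + ‖b‖ / r) * (r + j) := by
      have hexpand : (1 + ‖b‖ / r) * (r + j) = ‖b‖ + j + (r + ‖b‖ * j / r) := by
        field_simp
        ring
      have : 0 ≤ r + ‖b‖ * j / r := by positivity
      calc ‖b + j‖ ≤ ‖b‖ + j := by simpa using norm_add_le b (j : ℂ)
        _ ≤ (1 + ‖b‖ / r) * (r + j) := by linarith
    rw [pochRatio_succ, norm_div, norm_mul, hnorm, div_le_iff₀ hrj, pow_succ, mul_assoc]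
    exact mul_le_mul ih hb (norm_nonneg _) (by positivity)

end Pochhammer

theorem summable_norm_mul_pow_div_factorial {c : ℕ → ℂ} {K : ℝ} (hc : ∀ j, ‖c j‖ ≤ K ^ j)
    (t : ℂ) : Summable fun j => ‖c j * t ^ j / j.factorial‖ := by
  refine .of_nonneg_of_le (fun _ => norm_nonneg _) (fun j => ?_)
    (Real.summable_pow_div_factorial (K * ‖t‖))
  rw [norm_div, norm_mul, norm_pow, norm_natCast, mul_pow]
  gcongr
  exact hc j

section RomanovskiRouth

variable {lam : ℝ} (eta : ℝ)

theorem crrMonic_eq_mul_pochRatio (n : ℕ) (x : ℂ) :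
    crrMonic lam eta n x = 2 ^ n * pochRatio (2 * lam) lam n * crr lam eta n x := by
  rw [crrMonic, pochRatio, mul_div_assoc]

theorem crrMonic_recurrence (hlam : 0 < lam) (n : ℕ) (x : ℂ) :
    (2 * lam + n + 1) * crrMonic lam eta (n + 2) x =
      (2 * (lam + n + 1) * x - 2 * eta) * crrMonic lam eta (n + 1) x -
        (n + 1) * (x ^ 2 + 1) * crrMonic lam eta n x := by
  have h₀ : (lam : ℂ) + n ≠ 0 := by norm_cast; positivity
  have h₁ : (lam : ℂ) + n + 1 ≠ 0 := by norm_cast; positivity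
  have h₂ : 2 * (lam : ℂ) + n ≠ 0 := by norm_cast; positivity
  have h₃ : 2 * (lam : ℂ) + n + 1 ≠ 0 := by norm_cast; positivity
  simp only [crrMonic_eq_mul_pochRatio, pochRatio_succ, crr]
  push_cast
  simp only [← add_assoc]
  field_simp
  ring

theorem crrMonic_eq_binomSum (hlam : 0 < lam) (x : ℂ) (n : ℕ) :
    crrMonic lam eta n x =
      binomSum (pochRatio (2 * lam) (lam + eta * I)) (2 * I) (x - I) n := by
  induction n using Nat.twoStepInduction with
  | zero => simp [crrMonic, poch_zero, binomSum_zero, pochRatio_zero, crr]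
  | one =>
    have hlam' : (lam : ℂ) ≠ 0 := by exact_mod_cast hlam.ne'
    simp only [crrMonic, binomSum_one, pochRatio_succ, pochRatio_zero, poch_succ, poch_zero, crr]
    push_cast
    field_simp
    linear_combination (-2 * eta * lam) * I_sq
  | more n ih₀ ih₁ =>
    set S := binomSum (pochRatio (2 * lam) (lam + eta * I)) (2 * I) (x - I)
    have hc (j : ℕ) : pochRatio (2 * lam) (lam + eta * I) (j + 1) * (2 * lam + j) =
        pochRatio (2 * lam) (lam + eta * I) j * (lam + eta * I + j) :=
      pochRatio_succ_mul _ (by norm_cast; positivity)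
    have hn : 2 * (lam : ℂ) + n + 1 ≠ 0 := by norm_cast; positivity
    apply mul_left_cancel₀ hn
    rw [crrMonic_recurrence eta hlam, binomSum_recurrence hc, ih₀, ih₁]
    linear_combination (-(n + 1 : ℂ) * S n - 2 * eta * S (n + 1)) * I_sq

end RomanovskiRouth

open Nat in
theorem binomSum_mul_pow_div_factorial (c : ℕ → ℂ) (z y w : ℂ) (n : ℕ) :
    binomSum c z y n * w ^ n / (n ! : ℂ) =
      ∑ p ∈ antidiagonal n,
        c p.1 * (z * w) ^ p.1 / (p.1 ! : ℂ) * ((y * w) ^ p.2 / (p.2 ! : ℂ)) := by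
  rw [binomSum, homSum, sum_mul, sum_div]
  refine sum_congr rfl fun p hp => ?_
  obtain rfl := mem_antidiagonal.mp hp
  have : ((p.1 + p.2)! : ℂ) ≠ 0 := by exact_mod_cast (p.1 + p.2).factorial_ne_zero
  rw [cast_add_choose]
  field_simp
  ring

open Nat in
theorem hasSum_binomSum_mul_pow_div_factorial {c : ℕ → ℂ} {z w : ℂ}
    (hc : Summable fun j => ‖c j * (z * w) ^ j / (j ! : ℂ)‖) (y : ℂ) :
    HasSum (fun n => binomSum c z y n * w ^ n / (n ! : ℂ))
        (exp (y * w) * ∑' j, c j * (z * w) ^ j / (j ! : ℂ)) ∧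
      Summable fun n => ‖binomSum c z y n * w ^ n / (n ! : ℂ)‖ := by
  have hexp := NormedSpace.norm_expSeries_div_summable (y * w)
  have hprod := summable_norm_sum_mul_antidiagonal_of_summable_norm hc hexp
  simp only [← binomSum_mul_pow_div_factorial] at hprod
  refine ⟨?_, hprod⟩
  rw [mul_comm, exp_eq_exp_ℂ, ← (NormedSpace.expSeries_div_hasSum_exp (y * w)).tsum_eq,
    tsum_mul_tsum_eq_tsum_sum_antidiagonal_of_summable_norm hc hexp]
  simp only [← binomSum_mul_pow_div_factorial]
  exact hprod.of_norm.hasSum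

theorem stmt13 (lam eta : ℝ) (hlam : 0 < lam) (x : ℝ) (w : ℂ) :
    HasSum (fun n : ℕ => crrMonic lam eta n x * w ^ n / (Nat.factorial n : ℂ))
        (Complex.exp (x * w) * NFun lam eta w) ∧
      Summable (fun n : ℕ =>
        ‖crrMonic lam eta n x * w ^ n / (Nat.factorial n : ℂ)‖) := by
  set c := pochRatio (2 * lam) (lam + eta * I)
  have hc : ∀ j, ‖c j‖ ≤ (1 + ‖(lam : ℂ) + eta * I‖ / (2 * lam)) ^ j := by
    simpa using norm_pochRatio_le (r := 2 * lam) (by positivity) (lam + eta * I)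
  have hN : exp (x * w) * NFun lam eta w =
      exp ((x - I) * w) * ∑' j, c j * (2 * I * w) ^ j / (j.factorial : ℂ) := by
    rw [NFun, ← mul_assoc, ← exp_add, sub_mul, sub_eq_add_neg, neg_mul]
    congr 1
    exact tsum_congr fun j => by simp only [c, pochRatio]; ring
  simp only [crrMonic_eq_binomSum eta hlam, hN]
  exact hasSum_binomSum_mul_pow_div_factorial (summable_norm_mul_pow_div_factorial hc _) _
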